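/- The optimal value of the Lovász theta SDP of the graph G₆ equals √5: every primal feasible matrix X satisfies ∑_{i=1}^6 X_{ii} ≤ √5, and this value is attained. (Hence the quantum bound of the canonical non-contextuality inequality ∑_{i=1}^6 p_i ≤ 2 associated with G₆ equals √5.) -/

import Mathlib

/-- Adjacency in the graph `G₆` on the vertex set `{1, …, 6}` with edge set
`{ {1,3}, {1,4}, {1,6}, {2,4}, {2,5}, {2,6}, {3,5}, {4,6} }`. -/
def g6Adj (i j : ℕ) : Prop :=
  (i, j) ∈ [(1, 3), (1, 4), (1, 6), (2, 4), (2, 5), (2, 6), (3, 5), (4, 6)] ∨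
    (j, i) ∈ [(1, 3), (1, 4), (1, 6), (2, 4), (2, 5), (2, 6), (3, 5), (4, 6)]

/-- A real symmetric `7 × 7` matrix `X` (rows/columns indexed `0, 1, …, 6`) is primal feasible
for the Lovász theta SDP of `G₆` if it is positive semidefinite, `X 0 0 = 1`,
`X i i = X 0 i` for `i ∈ {1, …, 6}`, and `X i j = 0` on edges of `G₆`. -/
def g6PrimalFeasible (X : Matrix (Fin 7) (Fin 7) ℝ) : Prop :=
  X.PosSemidef ∧ X 0 0 = 1 ∧
    (∀ i : Fin 7, i.val ≠ 0 → X i i = X 0 i) ∧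
    (∀ i j : Fin 7, i.val ≠ 0 → j.val ≠ 0 → g6Adj i.val j.val → X i j = 0)


/-!
Vertex `6` of `G₆` is a true twin of vertex `4` (both have closed neighbourhood `{1, 2, 4, 6}`),
and `G₆ - 6` is the pentagon `1 - 3 - 5 - 2 - 4 - 1`. Write a feasible `X` as the Gram matrix of
vectors `v₀, …, v₆`. Since `v₄ ⟂ v₆`, the vectors `v₀` and `v₁, v₃, v₅, v₂, v₄ + v₆` are feasible
for the theta program of the pentagon with the same objective value, so `θ(G₆) ≤ θ(C₅) = √5`.
Conversely, Lovász's umbrella for `C₅`, padded with `v₆ = 0`, attains `√5`.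
-/

open Real
open scoped RealInnerProductSpace MatrixOrder ComplexOrder

theorem Matrix.PosSemidef.exists_eq_gram {𝕜 n : Type*} [RCLike 𝕜] [Fintype n]
    {A : Matrix n n 𝕜} (hA : A.PosSemidef) :
    ∃ v : n → EuclideanSpace 𝕜 n, A = Matrix.gram 𝕜 v := by
  classical
  obtain ⟨B, rfl⟩ := CStarAlgebra.nonneg_iff_eq_star_mul_self.mp hA.nonneg
  refine ⟨fun i ↦ WithLp.toLp 2 (fun k ↦ B k i), ?_⟩
  ext i j
  simp [Matrix.gram_apply, Matrix.mul_apply, PiLp.inner_apply, mul_comm]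

section InnerProductSpace

variable {E : Type*} [NormedAddCommGroup E] [InnerProductSpace ℝ E]

/-- The Gram matrix of `u, w 0, …, w 4` is feasible for the Lovász theta SDP of the pentagon
`Fin 5` (with `k ~ k + 1`); its objective value is `∑ k, ‖w k‖ ^ 2`. -/
def PentagonThetaFeasible (u : E) (w : Fin 5 → E) : Prop :=
  ‖u‖ = 1 ∧ (∀ k, ‖w k‖ ^ 2 = ⟪u, w k⟫) ∧ ∀ k, ⟪w k, w (k + 1)⟫ = 0

theorem PentagonThetaFeasible.inner_eq_zero {u : E} {w : Fin 5 → E}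
    (h : PentagonThetaFeasible u w) {j k : Fin 5} (hjk : k = j + 1 ∨ j = k + 1) :
    ⟪w j, w k⟫ = 0 := by
  rcases hjk with rfl | rfl
  · exact h.2.2 j
  · rw [real_inner_comm]
    exact h.2.2 k

/-- A sum of squares certificate. The coefficients of `r` come from the optimal dual solution:
`z³ + c z² - c z - 1 = (z - 1) (z² + φ z + 1)`, with `c = φ - 1 = (√5 - 1) / 2`, vanishes at the
fifth roots of unity `1, ζ², ζ³` on which the optimal dual slack matrix is singular. -/
theorem PentagonThetaFeasible.sum_norm_sq_le_sqrt_five {u : E} {w : Fin 5 → E}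
    (h : PentagonThetaFeasible u w) : ∑ k, ‖w k‖ ^ 2 ≤ √5 := by
  obtain ⟨hu, hw, horth⟩ := h
  replace hu : ⟪u, u⟫ = 1 := by rw [real_inner_self_eq_norm_sq, hu, one_pow]
  simp only [← real_inner_self_eq_norm_sq] at hw ⊢
  have h5 : √5 ^ 2 = 5 := sq_sqrt (by norm_num)
  set a := u - (√5)⁻¹ • ∑ k, w k
  set r := fun k : Fin 5 ↦ w (k + 3) + ((√5 - 1) / 2) • (w (k + 2) - w (k + 1)) - w k
  have key : √5 * ⟪a, a⟫ + (1 / 5) * ∑ k, ⟪r k, r k⟫ = √5 - ∑ k, ⟪w k, w k⟫ := by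
    have hinv : (√5)⁻¹ = √5 / 5 := by field_simp; rw [h5]
    have h53 : √5 ^ 3 = 5 * √5 := by rw [pow_succ, h5]
    have hdiag : ∑ k, (⟪w k, w k⟫ - ⟪u, w k⟫) = 0 :=
      Finset.sum_eq_zero fun k _ ↦ sub_eq_zero.2 (hw k)
    have hcycle : ∑ k, ⟪w k, w (k + 1)⟫ = 0 := Finset.sum_eq_zero fun k _ ↦ horth k
    simp only [a, r, Fin.sum_univ_five, inner_add_left, inner_add_right, inner_sub_left,
      inner_sub_right, real_inner_smul_right, Fin.reduceAdd, hinv, real_inner_comm]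
      at hdiag hcycle ⊢
    linear_combination (norm := skip) √5 * hu + 2 * hdiag + (√5 - 1) * hcycle
    ring_nf
    rw [h5, h53]
    ring
  have hsos : 0 ≤ √5 * ⟪a, a⟫ + (1 / 5) * ∑ k, ⟪r k, r k⟫ :=
    add_nonneg (mul_nonneg (sqrt_nonneg 5) real_inner_self_nonneg)
      (mul_nonneg (by norm_num) (Finset.sum_nonneg fun k _ ↦ real_inner_self_nonneg))
  linarith

def g6OfPentagon (u : E) (w : Fin 5 → E) : Fin 7 → E := ![u, w 0, w 3, w 1, w 4, w 2, 0]

theorem PentagonThetaFeasible.g6PrimalFeasible_gram {u : E} {w : Fin 5 → E}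
    (h : PentagonThetaFeasible u w) : g6PrimalFeasible (Matrix.gram ℝ (g6OfPentagon u w)) := by
  refine ⟨Matrix.posSemidef_gram ℝ _, by simp [g6OfPentagon, h.1], fun i hi ↦ ?_,
    fun i j hi hj hij ↦ ?_⟩
  · fin_cases i <;> simp [g6OfPentagon, h.2.1] at hi ⊢
  · fin_cases i <;> fin_cases j <;> simp [g6Adj, g6OfPentagon] at hi hj hij ⊢ <;>
      apply h.inner_eq_zero <;> decide

theorem sum_gram_g6OfPentagon (u : E) (w : Fin 5 → E) :
    ∑ i : Fin 6, Matrix.gram ℝ (g6OfPentagon u w) i.succ i.succ = ∑ k, ‖w k‖ ^ 2 := by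
  simp [Fin.sum_univ_six, Fin.sum_univ_five, g6OfPentagon]
  ring

end InnerProductSpace

theorem g6PrimalFeasible.exists_pentagonThetaFeasible {X : Matrix (Fin 7) (Fin 7) ℝ}
    (hX : g6PrimalFeasible X) :
    ∃ (u : EuclideanSpace ℝ (Fin 7)) (w : Fin 5 → EuclideanSpace ℝ (Fin 7)),
      PentagonThetaFeasible u w ∧ ∑ i : Fin 6, X i.succ i.succ = ∑ k, ‖w k‖ ^ 2 := by
  obtain ⟨hpsd, h00, hdiag, hedge⟩ := hX
  obtain ⟨v, rfl⟩ := hpsd.exists_eq_gram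
  simp only [Matrix.gram_apply, real_inner_self_eq_norm_sq] at h00 hdiag hedge
  have hu : ‖v 0‖ = 1 := (pow_eq_one_iff_of_nonneg (norm_nonneg _) two_ne_zero).1 h00
  have hd (i : Fin 7) (hi : i ≠ 0) : ‖v i‖ ^ 2 = ⟪v 0, v i⟫ :=
    hdiag i (Fin.val_ne_zero_iff.2 hi)
  have he (i j : Fin 7) (hij : g6Adj i j := by simp [g6Adj]) : ⟪v i, v j⟫ = 0 :=
    hedge i j (fun h ↦ by simp [h, g6Adj] at hij) (fun h ↦ by simp [h, g6Adj] at hij) hij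
  refine ⟨v 0, ![v 1, v 3, v 5, v 2, v 4 + v 6], ⟨hu, fun k ↦ ?_, fun k ↦ ?_⟩, ?_⟩
  · fin_cases k <;> simp [norm_add_sq_real, inner_add_right, hd, he 4 6]
  · fin_cases k <;>
      simp [inner_add_left, inner_add_right, he 1 3, he 3 5, he 5 2, he 2 4, he 2 6, he 4 1, he 6 1]
  · simp [Fin.sum_univ_six, Fin.sum_univ_five, norm_add_sq_real, he 4 6]
    ring

noncomputable def umbrellaAngle (k : Fin 5) : ℝ := 4 * π * (k : ℕ) / 5

/-- Lovász's umbrella: ribs of height `1 / √5` and radius `ρ` with `ρ² = 1 / √5 - 1 / 5`, so that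
`‖umbrella k‖² = 1 / √5 = ⟪e₀, umbrella k⟫`; consecutive ribs are `4π / 5` apart, which makes them
orthogonal as `cos (4π / 5) = -(1 + √5) / 4`. -/
noncomputable def umbrella (k : Fin 5) : EuclideanSpace ℝ (Fin 3) :=
  !₂[1 / √5, √((√5 - 1) / 5) * cos (umbrellaAngle k), √((√5 - 1) / 5) * sin (umbrellaAngle k)]

theorem inner_umbrella (j k : Fin 5) :
    ⟪umbrella j, umbrella k⟫ = 1 / 5 + (√5 - 1) / 5 * cos (umbrellaAngle j - umbrellaAngle k) := by
  have h5 : 1 / √5 * (1 / √5) = 1 / 5 := by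
    rw [div_mul_div_comm, one_mul, mul_self_sqrt (by norm_num)]
  have hρ : √((√5 - 1) / 5) ^ 2 = (√5 - 1) / 5 :=
    sq_sqrt (div_nonneg (sub_nonneg.2 (one_le_sqrt.2 (by norm_num))) (by norm_num))
  simp only [umbrella, PiLp.inner_apply, Fin.sum_univ_three, cos_sub, Matrix.cons_val_zero,
    Matrix.cons_val_one, Matrix.cons_val_two, Matrix.head_cons, Matrix.tail_cons,
    RCLike.inner_apply, conj_trivial]
  linear_combination h5 + (cos (umbrellaAngle j) * cos (umbrellaAngle k)
    + sin (umbrellaAngle j) * sin (umbrellaAngle k)) * hρ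

theorem cos_umbrellaAngle_sub_succ (k : Fin 5) :
    cos (umbrellaAngle k - umbrellaAngle (k + 1)) = -(1 + √5) / 4 := by
  have h : cos (4 * π / 5) = -(1 + √5) / 4 := by
    rw [show 4 * π / 5 = π - π / 5 by ring, cos_pi_sub, cos_pi_div_five]
    ring
  obtain ⟨n, hn⟩ :
      ∃ n : ℕ, umbrellaAngle k - umbrellaAngle (k + 1) = n * (2 * π) - 4 * π / 5 := by
    fin_cases k <;> [use 0; use 0; use 0; use 0; use 2] <;> simp [umbrellaAngle] <;> ring
  rw [hn, cos_nat_mul_two_pi_sub, h]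

theorem pentagonThetaFeasible_umbrella :
    PentagonThetaFeasible (EuclideanSpace.single 0 1) umbrella := by
  have h5 : √5 ^ 2 = 5 := sq_sqrt (by norm_num)
  have hpole k : ⟪EuclideanSpace.single 0 1, umbrella k⟫ = 1 / √5 := by
    simp [umbrella, EuclideanSpace.inner_single_left]
  refine ⟨by simp, fun k ↦ ?_, fun k ↦ ?_⟩
  · rw [← real_inner_self_eq_norm_sq, inner_umbrella, hpole, sub_self, cos_zero]
    field_simp
    linear_combination h5
  · rw [inner_umbrella, cos_umbrellaAngle_sub_succ]
    linear_combination (-1 / 20) * h5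

theorem sum_norm_sq_umbrella : ∑ k, ‖umbrella k‖ ^ 2 = √5 := by
  simp only [← real_inner_self_eq_norm_sq, inner_umbrella, sub_self, cos_zero, Finset.sum_const,
    Finset.card_univ, Fintype.card_fin, nsmul_eq_mul]
  ring

theorem g6_lovaszTheta_eq_sqrt5 :
    IsGreatest
      {t : ℝ | ∃ X : Matrix (Fin 7) (Fin 7) ℝ,
        g6PrimalFeasible X ∧ t = ∑ i : Fin 6, X i.succ i.succ}
      (Real.sqrt 5) := by
  refine ⟨⟨_, pentagonThetaFeasible_umbrella.g6PrimalFeasible_gram,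
    ((sum_gram_g6OfPentagon _ _).trans sum_norm_sq_umbrella).symm⟩, ?_⟩
  rintro t ⟨X, hX, rfl⟩
  obtain ⟨u, w, hw, hsum⟩ := hX.exists_pentagonThetaFeasible
  exact hsum ▸ hw.sum_norm_sq_le_sqrt_five
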